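/- Let G be a finite connected multigraph without self-loops on vertex set V, with graph lattice Λ(G) = ℤ^V/ℤ[V]. Suppose G is 2-connected, G contains no cut-edges, and v ∈ V is a vertex whose class v̄ in Λ(G) can be written v̄ = x + y with x, y ∈ Λ(G) and x·y = −1. Then the sub-multigraph of G induced on V∖{v} has a cut-edge e, and if R and S denote the vertex sets of the two connected components obtained by deleting e from that sub-multigraph, then {x, y} equals {class of ([R] + [v]), class of ([S] + [v])}. Furthermore, there exist unique vertices u_1, u_2 ∈ V∖{v} such that x·ū_1 = 1 and y·ū_2 = 1, and every vertex w ∉ {v, u_1, u_2} satisfies w̄·x ≤ 0 and w̄·y ≤ 0. -/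

import Mathlib

/-- The bilinear form of the multigraph with edge multiplicities `ε`:
`x·y = Σ_v d(v) x_v y_v − Σ_{v≠w} ε(v,w) x_v y_w`, where `d(v) = Σ_w ε(v,w)`. -/
def gform {V : Type*} [Fintype V] [DecidableEq V] (ε : V → V → ℕ) (x y : V → ℤ) : ℤ :=
  (∑ v, (∑ w, (ε v w : ℤ)) * (x v * y v)) -
    ∑ v, ∑ w ∈ Finset.univ.filter (· ≠ v), (ε v w : ℤ) * (x v * y w)

/-- The simple graph underlying the multigraph with edge multiplicities `ε`. -/
def gGraph {V : Type*} (ε : V → V → ℕ) : SimpleGraph V :=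
  SimpleGraph.fromRel (fun v w => 0 < ε v w)

/-- Connectivity of the sub-multigraph induced on the set `S`. -/
def gConnOn {V : Type*} (ε : V → V → ℕ) (S : Set V) : Prop :=
  (SimpleGraph.fromRel (fun v w : S => 0 < ε v.1 w.1)).Connected

/-- `ℤ[V]`, the span of the all-ones vector `[V]` in `ℤ^V`. -/
def onesSub (V : Type*) : Submodule ℤ (V → ℤ) :=
  Submodule.span ℤ ({fun _ => (1 : ℤ)} : Set (V → ℤ))

/-- The characteristic vector `[R] ∈ ℤ^V` of a finite set of vertices. -/
def chiF {V : Type*} [DecidableEq V] (R : Finset V) : V → ℤ :=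
  fun v => if v ∈ R then 1 else 0

/-- Irreducibility, in the graph lattice `Λ(G) = ℤ^V/ℤ[V]`, of the class of
`z : ℤ^V`, stated on representatives: the class of `z` cannot be written as
`x + y` with `x, y` nonzero classes and `x·y ≥ 0`. -/
def gIrredRep {V : Type*} [Fintype V] [DecidableEq V] (ε : V → V → ℕ) (z : V → ℤ) : Prop :=
  ¬ ∃ x y : V → ℤ, x ∉ onesSub V ∧ y ∉ onesSub V ∧
      z - (x + y) ∈ onesSub V ∧ 0 ≤ gform ε x y

/-- The characteristic vector of a set of vertices. -/
noncomputable def chiS {V : Type*} (S : Set V) : V → ℤ := S.indicator 1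

/-- The multiplicity function obtained from `ε` by deleting one edge between
`a` and `b`, when `ε a b = 1` (so that all edges between `a` and `b` vanish). -/
def εdel {V : Type*} [DecidableEq V] (ε : V → V → ℕ) (a b : V) : V → V → ℕ :=
  fun x y => if (x = a ∧ y = b) ∨ (x = b ∧ y = a) then 0 else ε x y

/-- The vertex set of the connected component of `a` in the sub-multigraph
(with multiplicities `ε`) induced on `S`. -/
def reachSet {V : Type*} (ε : V → V → ℕ) (S : Set V) (a : V) : Set V :=
  {z : V | ∃ (ha : a ∈ S) (hz : z ∈ S),
    (SimpleGraph.fromRel (fun p q : S => 0 < ε p.1 q.1)).Reachable ⟨a, ha⟩ ⟨z, hz⟩}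

/-!
Replace `y` by `[v] - x`, which represents the same class. Then
`2 (x·y) = -Σ_{u,w} ε(u,w) d (d - c)` with `d = x_u - x_w` and `c = [v]_u - [v]_w ∈ {-1, 0, 1}`,
and every term `d (d - c)` is a nonnegative integer. A total of `2` leaves room for exactly one
edge `ab` with a nonzero term: it is a simple edge avoiding `v`, `x` jumps by one across it, `x` is
constant along every other edge of `G - v`, and drops by `0` or `1` from `v` to its neighbours.
So `ab` is a cut-edge of `G - v`, and `x` is constant on each side. Since `G` itself has no
cut-edge, both sides contain a neighbour of `v`, which forces `x ≡ [R] + [v]`, and the values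
`x·ū` can be read off edge by edge. The vector `[v] - x` has the same shape with `a` and `b`
exchanged, which gives the statements about `y`.
-/

open Finset

lemma mem_onesSub_iff {V : Type*} {z : V → ℤ} : z ∈ onesSub V ↔ ∃ c : ℤ, ∀ w, z w = c := by
  simp only [onesSub, Submodule.mem_span_singleton, funext_iff, Pi.smul_apply, smul_eq_mul,
    mul_one]
  exact ⟨fun ⟨c, hc⟩ => ⟨c, fun w => (hc w).symm⟩, fun ⟨c, hc⟩ => ⟨c, fun w => (hc w).symm⟩⟩

lemma chiF_singleton_apply {V : Type*} [DecidableEq V] (v p : V) :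
    chiF {v} p = if p = v then 1 else 0 := by
  simp [chiF]

lemma abs_chiF_singleton_sub_le_one {V : Type*} [DecidableEq V] (v p q : V) :
    |chiF {v} p - chiF {v} q| ≤ 1 := by
  simp only [chiF_singleton_apply]
  split_ifs <;> simp

section Form

variable {V : Type*} [Fintype V] [DecidableEq V] {ε : V → V → ℕ}

lemma gform_eq_sum (hloop : ∀ v, ε v v = 0) (x y : V → ℤ) :
    gform ε x y = ∑ v, ∑ w, (ε v w : ℤ) * (x v * (y v - y w)) := by
  have hoff : ∀ v, ∑ w ∈ univ.filter (· ≠ v), (ε v w : ℤ) * (x v * y w) =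
      ∑ w, (ε v w : ℤ) * (x v * y w) := fun v =>
    sum_subset (filter_subset _ _) fun w _ hw => by
      obtain rfl : w = v := by simpa using hw
      simp [hloop]
  simp only [gform, hoff, sum_mul, ← sum_sub_distrib]
  exact sum_congr rfl fun v _ => sum_congr rfl fun w _ => by ring

lemma two_mul_gform (hsymm : ∀ v w, ε v w = ε w v) (hloop : ∀ v, ε v v = 0) (x y : V → ℤ) :
    2 * gform ε x y = ∑ v, ∑ w, (ε v w : ℤ) * ((x v - x w) * (y v - y w)) := by
  have hswap : ∑ v, ∑ w, (ε v w : ℤ) * (x v * (y v - y w)) =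
      ∑ v, ∑ w, (ε v w : ℤ) * (x w * (y w - y v)) := by
    rw [sum_comm]
    exact sum_congr rfl fun v _ => sum_congr rfl fun w _ => by rw [hsymm]
  rw [two_mul, gform_eq_sum hloop]
  nth_rw 2 [hswap]
  rw [← sum_add_distrib]
  exact sum_congr rfl fun v _ => by rw [← sum_add_distrib]; exact sum_congr rfl fun w _ => by ring

lemma gform_comm (hsymm : ∀ v w, ε v w = ε w v) (hloop : ∀ v, ε v v = 0) (x y : V → ℤ) :
    gform ε x y = gform ε y x := by
  have h : 2 * gform ε x y = 2 * gform ε y x := by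
    rw [two_mul_gform hsymm hloop, two_mul_gform hsymm hloop]
    exact sum_congr rfl fun v _ => sum_congr rfl fun w _ => by ring
  omega

lemma gform_congr_right (hloop : ∀ v, ε v v = 0) (x : V → ℤ) {y y' : V → ℤ}
    (h : y - y' ∈ onesSub V) : gform ε x y = gform ε x y' := by
  obtain ⟨c, hc⟩ := mem_onesSub_iff.1 h
  simp only [Pi.sub_apply] at hc
  simp only [gform_eq_sum hloop]
  exact sum_congr rfl fun v _ => sum_congr rfl fun w _ => by
    rw [show y v - y w = y' v - y' w by linarith [hc v, hc w]]

lemma gform_chiF_singleton (hloop : ∀ v, ε v v = 0) (u : V) (x : V → ℤ) :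
    gform ε (chiF {u}) x = ∑ q, (ε u q : ℤ) * (x u - x q) := by
  simp [gform_eq_sum hloop, chiF_singleton_apply, ite_mul, sum_ite_eq']

end Form

lemma exists_pair_of_sum_eq_two {ι : Type*} [Fintype ι] [DecidableEq ι] {t : ι → ι → ℤ}
    (hnonneg : ∀ i j, 0 ≤ t i j) (hsymm : ∀ i j, t i j = t j i) (hdiag : ∀ i, t i i = 0)
    (hsum : ∑ i, ∑ j, t i j = 2) :
    ∃ a b, t a b = 1 ∧ ∀ i j, ¬((i = a ∧ j = b) ∨ (i = b ∧ j = a)) → t i j = 0 := by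
  rw [← Fintype.sum_prod_type'] at hsum
  have hle : ∀ s : Finset (ι × ι), ∑ p ∈ s, t p.1 p.2 ≤ 2 := fun s =>
    hsum ▸ sum_le_univ_sum_of_nonneg fun p => hnonneg p.1 p.2
  obtain ⟨a, b, hpos⟩ : ∃ a b, 0 < t a b := by
    by_contra! h
    have : ∑ p : ι × ι, t p.1 p.2 ≤ 0 := sum_nonpos fun p _ => h p.1 p.2
    omega
  have hab : (a, b) ≠ (b, a) := by
    rintro ⟨⟩
    simp [hdiag] at hpos
  have hpair := hle {(a, b), (b, a)}
  simp only [sum_pair hab, hsymm b a] at hpair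
  refine ⟨a, b, by omega, fun i j hij => ?_⟩
  have hnot : (i, j) ∉ ({(a, b), (b, a)} : Finset (ι × ι)) := by simpa using hij
  have htriple := hle (insert (i, j) {(a, b), (b, a)})
  simp only [sum_insert hnot, sum_pair hab, hsymm b a] at htriple
  linarith [hnonneg i j]

lemma mul_sub_nonneg_of_abs_le_one {c d : ℤ} (hc : |c| ≤ 1) : 0 ≤ d * (d - c) := by
  obtain ⟨hc₁, hc₂⟩ := abs_le.1 hc
  rcases le_or_gt 0 d with hd | hd
  · rcases hd.eq_or_lt with rfl | hd
    · simp
    · exact mul_nonneg hd.le (by omega)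
  · exact mul_nonneg_of_nonpos_of_nonpos hd.le (by omega)

lemma eq_zero_of_mul_sub_eq_one {c d : ℤ} (hc : |c| ≤ 1) (h : d * (d - c) = 1) : c = 0 := by
  obtain ⟨hc₁, hc₂⟩ := abs_le.1 hc
  rcases Int.eq_one_or_neg_one_of_mul_eq_one h with rfl | rfl <;> omega

section CutPotential

variable {V : Type*} [DecidableEq V] {ε : V → V → ℕ}

lemma εdel_comm (ε : V → V → ℕ) (a b : V) : εdel ε a b = εdel ε b a := by
  funext p q
  simp only [εdel, or_comm]

lemma pos_εdel_iff {a b p q : V} :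
    0 < εdel ε a b p q ↔ ¬((p = a ∧ q = b) ∨ (p = b ∧ q = a)) ∧ 0 < ε p q := by
  unfold εdel
  split_ifs with h <;> simp [h]

/-- The shape that `x·y = -1` forces on `x`; `ab` is the cut-edge of `G - v`. -/
structure IsCutPotential (ε : V → V → ℕ) (v a b : V) (f : V → ℤ) : Prop where
  left_ne : a ≠ v
  right_ne : b ≠ v
  edge : ε a b = 1
  jump : f a = f b + 1
  flat : ∀ p q, p ≠ v → q ≠ v → 0 < εdel ε a b p q → f p = f q
  near : ∀ p, p ≠ v → 0 < ε p v → f p = f v ∨ f p = f v - 1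

lemma sum_edge_mul_sub_eq_two [Fintype V] (hsymm : ∀ v w, ε v w = ε w v)
    (hloop : ∀ v, ε v v = 0) {v : V} {x y : V → ℤ} (hsum : chiF {v} - (x + y) ∈ onesSub V)
    (hprod : gform ε x y = -1) :
    ∑ u, ∑ w, (ε u w : ℤ) * ((x u - x w) * ((x u - x w) - (chiF {v} u - chiF {v} w))) = 2 := by
  have h := two_mul_gform hsymm hloop x (chiF {v} - x)
  rw [gform_congr_right hloop x (by rwa [sub_sub]), hprod] at h
  have hneg : ∑ u, ∑ w, (ε u w : ℤ) * ((x u - x w) * ((x u - x w) - (chiF {v} u - chiF {v} w))) =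
      -∑ u, ∑ w, (ε u w : ℤ) * ((x u - x w) * ((chiF {v} - x) u - (chiF {v} - x) w)) := by
    simp only [← sum_neg_distrib, Pi.sub_apply]
    exact sum_congr rfl fun u _ => sum_congr rfl fun w _ => by ring
  linarith

lemma exists_isCutPotential [Fintype V] (hsymm : ∀ v w, ε v w = ε w v) (hloop : ∀ v, ε v v = 0)
    {v : V} {x y : V → ℤ} (hsum : chiF {v} - (x + y) ∈ onesSub V) (hprod : gform ε x y = -1) :
    ∃ a b, IsCutPotential ε v a b x := by
  obtain ⟨a, b, htab, hzero⟩ := exists_pair_of_sum_eq_two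
    (fun u w => mul_nonneg (by positivity)
      (mul_sub_nonneg_of_abs_le_one (abs_chiF_singleton_sub_le_one v u w)))
    (fun u w => by rw [hsymm u w]; ring) (fun u => by simp)
    (sum_edge_mul_sub_eq_two hsymm hloop hsum hprod)
  obtain ⟨hεab, hdab⟩ : (ε a b : ℤ) = 1 ∧
      (x a - x b) * ((x a - x b) - (chiF {v} a - chiF {v} b)) = 1 := by
    rcases Int.eq_one_or_neg_one_of_mul_eq_one' htab with h | h
    · exact h
    · omega
  have hχab := eq_zero_of_mul_sub_eq_one (abs_chiF_singleton_sub_le_one v a b) hdab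
  have hab : a ≠ b := by
    rintro rfl
    simp [hloop] at hεab
  have hav : a ≠ v := by
    rintro rfl
    simp [chiF_singleton_apply, hab.symm] at hχab
  have hbv : b ≠ v := by
    rintro rfl
    simp [chiF_singleton_apply, hab] at hχab
  have hflat : ∀ p q, p ≠ v → q ≠ v → 0 < εdel ε a b p q → x p = x q := by
    intro p q hp hq h
    obtain ⟨hpq, hε⟩ := pos_εdel_iff.1 h
    have := hzero p q hpq
    simp only [chiF_singleton_apply, hp, hq, ↓reduceIte, sub_self, sub_zero, mul_eq_zero,
      Int.natCast_eq_zero, hε.ne', or_self, false_or] at this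
    omega
  have hnear : ∀ p, p ≠ v → 0 < ε p v → x p = x v ∨ x p = x v - 1 := by
    intro p hp hε
    have := hzero p v (by tauto)
    simp only [chiF_singleton_apply, hp, ↓reduceIte, zero_sub, sub_neg_eq_add, mul_eq_zero,
      Int.natCast_eq_zero, hε.ne', false_or] at this
    omega
  rw [hχab, sub_zero] at hdab
  rcases Int.eq_one_or_neg_one_of_mul_eq_one hdab with h | h
  · exact ⟨a, b, hav, hbv, by exact_mod_cast hεab, by omega, hflat, hnear⟩
  · refine ⟨b, a, hbv, hav, by rw [hsymm]; exact_mod_cast hεab, by omega, ?_, hnear⟩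
    intro p q hp hq h
    exact hflat p q hp hq (by rwa [εdel_comm])

end CutPotential

lemma SimpleGraph.Reachable.of_forall_adj_imp {α : Type*} {G : SimpleGraph α} {P : α → Prop}
    (hP : ∀ p q, G.Adj p q → P p → P q) {a b : α} (h : G.Reachable a b) (ha : P a) : P b := by
  have hr := (SimpleGraph.reachable_iff_reflTransGen a b).1 h
  clear h
  induction hr with
  | refl => exact ha
  | tail _ hadj ih => exact hP _ _ hadj ih

section ReachSet

variable {V : Type*} {ε : V → V → ℕ} {S : Set V} {c z : V}

lemma reachSet_subset : reachSet ε S c ⊆ S := fun _ ⟨_, hz, _⟩ => hz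

lemma mem_reachSet_self (hc : c ∈ S) : c ∈ reachSet ε S c := ⟨hc, hc, .rfl⟩

lemma mem_reachSet_of_gConnOn (h : gConnOn ε S) (hc : c ∈ S) (hz : z ∈ S) :
    z ∈ reachSet ε S c :=
  ⟨hc, hz, h.preconnected _ _⟩

lemma mem_reachSet_of_adj {p q : V} (hp : p ∈ reachSet ε S c) (hq : q ∈ S)
    (hpq : 0 < ε p q ∨ 0 < ε q p) : q ∈ reachSet ε S c := by
  obtain ⟨hc, hpS, hr⟩ := hp
  by_cases hpq' : p = q
  · subst hpq'
    exact ⟨hc, hpS, hr⟩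
  · exact ⟨hc, hq, hr.trans (SimpleGraph.Adj.reachable
      (SimpleGraph.fromRel_adj _ _ _ |>.2 ⟨fun h => hpq' (congrArg Subtype.val h), hpq⟩))⟩

lemma reachSet_induction {P : V → Prop} (hc : P c)
    (hP : ∀ p ∈ S, ∀ q ∈ S, 0 < ε p q ∨ 0 < ε q p → P p → P q) (hz : z ∈ reachSet ε S c) :
    P z := by
  obtain ⟨hcS, hzS, hr⟩ := hz
  refine hr.of_forall_adj_imp (P := fun p : S => P p) (fun p q hpq => ?_) hc
  exact hP p p.2 q q.2 ((SimpleGraph.fromRel_adj _ _ _).1 hpq).2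

lemma exists_adj_compl_of_connected (h : (gGraph ε).Connected) (hc : c ∈ S) {v : V} (hv : v ∉ S) :
    ∃ p ∈ reachSet ε S c, ∃ q ∉ S, 0 < ε p q ∨ 0 < ε q p := by
  by_contra! hclosed
  refine hv (reachSet_subset ((h.preconnected c v).of_forall_adj_imp
    (P := (· ∈ reachSet ε S c)) (fun p q hpq hp => ?_) (mem_reachSet_self hc)))
  have hpq := ((SimpleGraph.fromRel_adj _ _ _).1 hpq).2
  by_cases hq : q ∈ S
  · exact mem_reachSet_of_adj hp hq hpq
  · exact absurd hpq (by simpa using hclosed p hp q hq)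

lemma reachSet_union_reachSet_εdel [DecidableEq V] (h : gConnOn ε S) {a b : V} (ha : a ∈ S)
    (hb : b ∈ S) : reachSet (εdel ε a b) S a ∪ reachSet (εdel ε a b) S b = S := by
  refine (Set.union_subset reachSet_subset reachSet_subset).antisymm fun z hz => ?_
  refine reachSet_induction (Or.inl (mem_reachSet_self ha)) (fun p _ q hq hpq hp => ?_)
    (mem_reachSet_of_gConnOn h ha hz)
  by_cases hab : (p = a ∧ q = b) ∨ (p = b ∧ q = a)
  · rcases hab with ⟨-, rfl⟩ | ⟨-, rfl⟩
    · exact Or.inr (mem_reachSet_self hb)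
    · exact Or.inl (mem_reachSet_self ha)
  · have hpq' : 0 < εdel ε a b p q ∨ 0 < εdel ε a b q p := by
      simp only [pos_εdel_iff]
      tauto
    exact hp.imp (mem_reachSet_of_adj · hq hpq') (mem_reachSet_of_adj · hq hpq')

end ReachSet

namespace IsCutPotential

variable {V : Type*} [DecidableEq V] {ε : V → V → ℕ} {v a b : V} {f : V → ℤ}

lemma swap (hsymm : ∀ v w, ε v w = ε w v) (hf : IsCutPotential ε v a b f) :
    IsCutPotential ε v b a (chiF {v} - f) where
  left_ne := hf.right_ne
  right_ne := hf.left_ne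
  edge := hsymm b a ▸ hf.edge
  jump := by
    simp [chiF_singleton_apply, hf.left_ne, hf.right_ne, hf.jump]
  flat p q hp hq h := by
    simp [chiF_singleton_apply, hp, hq, hf.flat p q hp hq (εdel_comm ε a b ▸ h)]
  near p hp h := by
    simp only [Pi.sub_apply, chiF_singleton_apply, hp, ↓reduceIte, zero_sub, sub_sub_cancel_left,
      neg_inj]
    rcases hf.near p hp h with h | h <;> omega

lemma eq_of_mem_reachSet (hf : IsCutPotential ε v a b f) {c z : V}
    (hz : z ∈ reachSet (εdel ε a b) {v}ᶜ c) : f z = f c := by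
  refine reachSet_induction (P := fun z => f z = f c) rfl (fun p hp q hq hpq hfp => ?_) hz
  rcases hpq with h | h
  · rw [← hfp, hf.flat p q hp hq h]
  · rw [← hfp, hf.flat q p hq hp h]

lemma not_gConnOn (hf : IsCutPotential ε v a b f) : ¬ gConnOn (εdel ε a b) {v}ᶜ := fun h => by
  have := hf.eq_of_mem_reachSet (mem_reachSet_of_gConnOn h hf.left_ne hf.right_ne)
  have := hf.jump
  omega

lemma apply_eq_or (hsymm : ∀ v w, ε v w = ε w v) (hf : IsCutPotential ε v a b f)
    (hconn : (gGraph (εdel ε a b)).Connected) {c : V} (hc : c ≠ v) :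
    f c = f v ∨ f c = f v - 1 := by
  obtain ⟨p, hp, q, hq, hpq⟩ :=
    exists_adj_compl_of_connected hconn (S := {v}ᶜ) (v := v) hc (by simp)
  obtain rfl : q = v := by simpa using hq
  rw [← hf.eq_of_mem_reachSet hp]
  refine hf.near p (reachSet_subset hp) ?_
  rcases hpq with h | h
  · exact (pos_εdel_iff.1 h).2
  · exact hsymm _ p ▸ (pos_εdel_iff.1 h).2

lemma apply_left_right (hsymm : ∀ v w, ε v w = ε w v) (hf : IsCutPotential ε v a b f)
    (hconn : (gGraph (εdel ε a b)).Connected) : f a = f v ∧ f b = f v - 1 := by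
  have := hf.apply_eq_or hsymm hconn hf.left_ne
  have := hf.apply_eq_or hsymm hconn hf.right_ne
  have := hf.jump
  omega

lemma sub_mem_onesSub [Fintype V] (hsymm : ∀ v w, ε v w = ε w v) (hf : IsCutPotential ε v a b f)
    (h2conn : gConnOn ε {v}ᶜ) (hconn : (gGraph (εdel ε a b)).Connected) :
    f - (chiS (reachSet (εdel ε a b) {v}ᶜ a) + chiF {v}) ∈ onesSub V := by
  obtain ⟨hfa, hfb⟩ := hf.apply_left_right hsymm hconn
  refine mem_onesSub_iff.2 ⟨f v - 1, fun w => ?_⟩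
  by_cases hw : w = v
  · subst hw
    have : w ∉ reachSet (εdel ε a b) {w}ᶜ a := fun h => reachSet_subset h rfl
    simp [chiS, this, chiF_singleton_apply]
  by_cases hwa : w ∈ reachSet (εdel ε a b) {v}ᶜ a
  · simp [chiS, hwa, chiF_singleton_apply, hw, hf.eq_of_mem_reachSet hwa, hfa]
  · have hwb := (reachSet_union_reachSet_εdel h2conn hf.left_ne hf.right_ne).ge hw
    simp [chiS, hwa, chiF_singleton_apply, hw, hf.eq_of_mem_reachSet (hwb.resolve_left hwa), hfb]

lemma mul_sub_nonpos (hf : IsCutPotential ε v a b f) {u q : V} (hu : u ≠ v) (hua : u ≠ a) :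
    (ε u q : ℤ) * (f u - f q) ≤ 0 := by
  rcases (ε u q).eq_zero_or_pos with h | h
  · simp [h]
  refine mul_nonpos_of_nonneg_of_nonpos (by positivity) ?_
  by_cases hqv : q = v
  · subst hqv
    rcases hf.near u hu h with h | h <;> omega
  by_cases hub : u = b ∧ q = a
  · obtain ⟨rfl, rfl⟩ := hub
    have := hf.jump
    omega
  · have := hf.flat u q hu hqv (pos_εdel_iff.2 ⟨by tauto, h⟩)
    omega

lemma gform_chiF_nonpos [Fintype V] (hloop : ∀ v, ε v v = 0) (hf : IsCutPotential ε v a b f)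
    {u : V} (hu : u ≠ v) (hua : u ≠ a) : gform ε (chiF {u}) f ≤ 0 := by
  rw [gform_chiF_singleton hloop]
  exact sum_nonpos fun q _ => hf.mul_sub_nonpos hu hua

lemma eq_left_of_gform_chiF_eq_one [Fintype V] (hloop : ∀ v, ε v v = 0)
    (hf : IsCutPotential ε v a b f) {u : V} (hu : u ≠ v) (h : gform ε (chiF {u}) f = 1) :
    u = a := by
  by_contra hua
  have := hf.gform_chiF_nonpos hloop hu hua
  omega

lemma gform_chiF_left [Fintype V] (hsymm : ∀ v w, ε v w = ε w v) (hloop : ∀ v, ε v v = 0)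
    (hf : IsCutPotential ε v a b f) (hconn : (gGraph (εdel ε a b)).Connected) :
    gform ε (chiF {a}) f = 1 := by
  have hab : a ≠ b := by
    rintro rfl
    simpa [hloop] using hf.edge
  rw [gform_chiF_singleton hloop, sum_eq_single b]
  · simp [hf.edge, hf.jump]
  · intro q _ hqb
    rcases (ε a q).eq_zero_or_pos with h | h
    · simp [h]
    by_cases hqv : q = v
    · simp [hqv, (hf.apply_left_right hsymm hconn).1]
    · simp [hf.flat a q hf.left_ne hqv (pos_εdel_iff.2 ⟨by tauto, h⟩)]
  · simp

end IsCutPotential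

theorem stmt_6_general {V : Type*} [Fintype V] [DecidableEq V] (ε : V → V → ℕ)
    (hsymm : ∀ v w, ε v w = ε w v) (hloop : ∀ v, ε v v = 0)
    (h2conn : ∀ u : V, gConnOn ε ({u}ᶜ : Set V))
    (hnocut : ¬ ∃ a b : V, ε a b = 1 ∧ ¬ (gGraph (εdel ε a b)).Connected)
    (v : V) (x y : V → ℤ)
    (hsum : chiF {v} - (x + y) ∈ onesSub V)
    (hprod : gform ε x y = -1) :
    (∃ a b : V, a ≠ v ∧ b ≠ v ∧ ε a b = 1 ∧
      ¬ gConnOn (εdel ε a b) ({v}ᶜ : Set V) ∧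
      reachSet (εdel ε a b) {v}ᶜ a ∪ reachSet (εdel ε a b) {v}ᶜ b = ({v}ᶜ : Set V) ∧
      ((x - (chiS (reachSet (εdel ε a b) {v}ᶜ a) + chiF {v}) ∈ onesSub V ∧
        y - (chiS (reachSet (εdel ε a b) {v}ᶜ b) + chiF {v}) ∈ onesSub V) ∨
       (x - (chiS (reachSet (εdel ε a b) {v}ᶜ b) + chiF {v}) ∈ onesSub V ∧
        y - (chiS (reachSet (εdel ε a b) {v}ᶜ a) + chiF {v}) ∈ onesSub V))) ∧
    (∃ u₁ u₂ : V, u₁ ≠ v ∧ u₂ ≠ v ∧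
      gform ε x (chiF {u₁}) = 1 ∧ gform ε y (chiF {u₂}) = 1 ∧
      (∀ u : V, u ≠ v → gform ε x (chiF {u}) = 1 → u = u₁) ∧
      (∀ u : V, u ≠ v → gform ε y (chiF {u}) = 1 → u = u₂) ∧
      ∀ w : V, w ∉ ({v, u₁, u₂} : Set V) →
        gform ε (chiF {w}) x ≤ 0 ∧ gform ε (chiF {w}) y ≤ 0) := by
  obtain ⟨a, b, hx⟩ := exists_isCutPotential hsymm hloop hsum hprod
  have hconn : (gGraph (εdel ε a b)).Connected := by
    by_contra h
    exact hnocut ⟨a, b, hx.edge, h⟩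
  have hz := hx.swap hsymm
  have hconn' : (gGraph (εdel ε b a)).Connected := εdel_comm ε a b ▸ hconn
  have hyz : y - (chiF {v} - x) ∈ onesSub V := by
    simpa [sub_sub_eq_add_sub, add_comm] using neg_mem hsum
  have hy : ∀ u, gform ε (chiF {u}) y = gform ε (chiF {u}) (chiF {v} - x) :=
    fun u => gform_congr_right hloop _ hyz
  refine ⟨⟨a, b, hx.left_ne, hx.right_ne, hx.edge, hx.not_gConnOn,
      reachSet_union_reachSet_εdel (h2conn v) hx.left_ne hx.right_ne,
      Or.inl ⟨hx.sub_mem_onesSub hsymm (h2conn v) hconn, ?_⟩⟩,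
    a, b, hx.left_ne, hx.right_ne, ?_, ?_, fun u hu h => ?_, fun u hu h => ?_, fun w hw => ?_⟩
  · have hzb := hz.sub_mem_onesSub hsymm (h2conn v) hconn'
    rw [← εdel_comm] at hzb
    simpa using add_mem hyz hzb
  · rw [gform_comm hsymm hloop, hx.gform_chiF_left hsymm hloop hconn]
  · rw [gform_comm hsymm hloop, hy, hz.gform_chiF_left hsymm hloop hconn']
  · exact hx.eq_left_of_gform_chiF_eq_one hloop hu (gform_comm hsymm hloop x _ ▸ h)
  · exact hz.eq_left_of_gform_chiF_eq_one hloop hu (hy u ▸ gform_comm hsymm hloop y _ ▸ h)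
  · simp only [Set.mem_insert_iff, Set.mem_singleton_iff, not_or] at hw
    exact ⟨hx.gform_chiF_nonpos hloop hw.1 hw.2.1, hy w ▸ hz.gform_chiF_nonpos hloop hw.1 hw.2.2⟩

/-- Lemma 3.4 of the paper. -/
theorem stmt_6 {V : Type*} [Fintype V] [DecidableEq V] (ε : V → V → ℕ)
    (hcard : 2 ≤ Fintype.card V)
    (hsymm : ∀ v w, ε v w = ε w v) (hloop : ∀ v, ε v v = 0)
    (hconn : (gGraph ε).Connected)
    (h2conn : ∀ u : V, gConnOn ε ({u}ᶜ : Set V))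
    (hnocut : ¬ ∃ a b : V, ε a b = 1 ∧ ¬ (gGraph (εdel ε a b)).Connected)
    (v : V) (x y : V → ℤ)
    (hsum : chiF {v} - (x + y) ∈ onesSub V)
    (hprod : gform ε x y = -1) :
    (∃ a b : V, a ≠ v ∧ b ≠ v ∧ ε a b = 1 ∧
      ¬ gConnOn (εdel ε a b) ({v}ᶜ : Set V) ∧
      reachSet (εdel ε a b) {v}ᶜ a ∪ reachSet (εdel ε a b) {v}ᶜ b = ({v}ᶜ : Set V) ∧
      ((x - (chiS (reachSet (εdel ε a b) {v}ᶜ a) + chiF {v}) ∈ onesSub V ∧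
        y - (chiS (reachSet (εdel ε a b) {v}ᶜ b) + chiF {v}) ∈ onesSub V) ∨
       (x - (chiS (reachSet (εdel ε a b) {v}ᶜ b) + chiF {v}) ∈ onesSub V ∧
        y - (chiS (reachSet (εdel ε a b) {v}ᶜ a) + chiF {v}) ∈ onesSub V))) ∧
    (∃ u₁ u₂ : V, u₁ ≠ v ∧ u₂ ≠ v ∧
      gform ε x (chiF {u₁}) = 1 ∧ gform ε y (chiF {u₂}) = 1 ∧
      (∀ u : V, u ≠ v → gform ε x (chiF {u}) = 1 → u = u₁) ∧
      (∀ u : V, u ≠ v → gform ε y (chiF {u}) = 1 → u = u₂) ∧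
      ∀ w : V, w ∉ ({v, u₁, u₂} : Set V) →
        gform ε (chiF {w}) x ≤ 0 ∧ gform ε (chiF {w}) y ≤ 0) :=
  stmt_6_general ε hsymm hloop h2conn hnocut v x y hsum hprod
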